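/- There exists a constant C > 0 such that for every integer n ≥ 2 and every real u with −√n ≤ u, one has F_n(u) ≤ C · 2^{−|u|}. -/

import Mathlib

open Real Filter Set

/-!
Write `d = n + ⌊u√n⌋`, so that `F_n(u) = √n · C(n+d, n) / 2^(n+d)`, i.e. `√n` times the probability
of exactly `n` heads in `n + d` fair coin tosses. Consecutive terms in `d` have ratio
`(n+d+1) / (2(d+1))`, so the sequence is unimodal with its peak at `d = n`, where
`√n · C(2n, n) / 4^n ≤ 1` (a Wallis-type induction). Once `|d - n| ≥ 12√n` the ratio lies beyond
`2^(∓1/√n)` (via `2^t ≤ 1 + t` on `[0, 1]`), so away from the peak the terms decay like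
`2^(-|d - n|/√n)`, which is `2^(-|u|)` up to a constant factor.
-/

/-- For `n ≥ 1` and `u ≥ -√n`,
`F_n(u) = binom(2n + ⌊u√n⌋, n) · √n / 2^{2n + ⌊u√n⌋}`. -/
noncomputable def Fbin (n : ℕ) (u : ℝ) : ℝ :=
  (Nat.choose ((2 * (n : ℤ) + ⌊u * Real.sqrt n⌋).toNat) n : ℝ) * Real.sqrt n
    / (2 : ℝ) ^ ((2 * (n : ℤ) + ⌊u * Real.sqrt n⌋).toNat)

lemma Nat.centralBinom_sq_mul_le (n : ℕ) : n.centralBinom ^ 2 * (2 * n + 1) ≤ 16 ^ n := by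
  induction n with
  | zero => simp
  | succ n ih =>
    have hrec := Nat.succ_mul_centralBinom_succ n
    refine Nat.le_of_mul_le_mul_left ?_ (by positivity : 0 < (n + 1) ^ 2)
    calc (n + 1) ^ 2 * ((n + 1).centralBinom ^ 2 * (2 * (n + 1) + 1))
        = 4 * (2 * n + 1) * (2 * n + 3) * (n.centralBinom ^ 2 * (2 * n + 1)) := by
          rw [← mul_assoc, ← mul_pow, hrec]; ring
      _ ≤ 4 * (2 * n + 1) * (2 * n + 3) * 16 ^ n := Nat.mul_le_mul_left _ ih
      _ ≤ 16 * (n + 1) ^ 2 * 16 ^ n := Nat.mul_le_mul_right _ (by nlinarith)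
      _ = (n + 1) ^ 2 * 16 ^ (n + 1) := by ring

lemma two_rpow_le_one_add {t : ℝ} (ht₀ : 0 ≤ t) (ht₁ : t ≤ 1) : (2 : ℝ) ^ t ≤ 1 + t := by
  simpa [one_add_one_eq_two] using rpow_one_add_le_one_add_mul_self (s := 1) (by norm_num) ht₀ ht₁

lemma two_rpow_inv_pow (s : ℝ) (e : ℕ) : ((2 : ℝ) ^ s⁻¹) ^ e = 2 ^ (e / s) := by
  rw [← rpow_natCast, ← rpow_mul zero_le_two, inv_mul_eq_div]

lemma abs_sub_one_le_abs_floor_mul_div (x : ℝ) {s : ℝ} (hs : 1 ≤ s) :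
    |x| - 1 ≤ |(⌊x * s⌋ : ℝ)| / s := by
  have hfract : |x * s| - |(⌊x * s⌋ : ℝ)| < 1 := by
    refine (abs_sub_abs_le_abs_sub _ _).trans_lt ?_
    rw [Int.self_sub_floor, abs_of_nonneg (Int.fract_nonneg _)]
    exact Int.fract_lt_one _
  rw [abs_mul, abs_of_pos (by linarith : 0 < s)] at hfract
  rw [le_div_iff₀ (by linarith)]
  linarith

noncomputable def binomMass (n d : ℕ) : ℝ := ((n + d).choose n : ℝ) / 2 ^ (n + d)

section binomMass

variable {n : ℕ}

lemma binomMass_pos (n d : ℕ) : 0 < binomMass n d :=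
  div_pos (mod_cast Nat.choose_pos (Nat.le_add_right n d)) (by positivity)

lemma two_mul_succ_mul_binomMass_succ (n d : ℕ) :
    2 * (d + 1) * binomMass n (d + 1) = (n + d + 1) * binomMass n d := by
  have h : (n + d).choose n * (n + d + 1) = (n + d + 1).choose n * (d + 1) := by
    rw [Nat.choose_mul_succ_eq]; congr 2; omega
  have h' : ((n + d).choose n : ℝ) * (n + d + 1) = (n + d + 1).choose n * (d + 1) := by
    exact_mod_cast h
  simp only [binomMass, ← add_assoc, pow_succ]
  field_simp
  linear_combination -h'

lemma binomMass_le_succ {d : ℕ} (h : d < n) : binomMass n d ≤ binomMass n (d + 1) := by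
  have hrec := two_mul_succ_mul_binomMass_succ n d
  have : (2 * (d + 1) : ℝ) ≤ n + d + 1 := by norm_cast; omega
  nlinarith [binomMass_pos n d, binomMass_pos n (d + 1)]

lemma binomMass_succ_le {d : ℕ} (h : n ≤ d) : binomMass n (d + 1) ≤ binomMass n d := by
  have hrec := two_mul_succ_mul_binomMass_succ n d
  have : (n + d + 1 : ℝ) ≤ 2 * (d + 1) := by norm_cast; omega
  nlinarith [binomMass_pos n d, binomMass_pos n (d + 1)]

lemma binomMass_le_binomMass_self (n d : ℕ) : binomMass n d ≤ binomMass n n := by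
  rcases le_total d n with h | h
  · have := geom_le (u := fun k ↦ binomMass n (d + k)) zero_le_one (n - d)
      fun k hk ↦ by simpa [add_assoc] using binomMass_le_succ (d := d + k) (by omega)
    simpa [Nat.add_sub_cancel' h] using this
  · have := le_geom (u := fun k ↦ binomMass n (n + k)) zero_le_one (d - n)
      fun k _ ↦ by simpa [add_assoc] using binomMass_succ_le (d := n + k) (by omega)
    simpa [Nat.add_sub_cancel' h] using this

lemma binomMass_self_mul_sqrt_le_one (n : ℕ) : binomMass n n * √n ≤ 1 := by
  have h16 : (n.centralBinom : ℝ) ^ 2 * (2 * n + 1) ≤ 16 ^ n := mod_cast n.centralBinom_sq_mul_le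
  have h4 : ((4 : ℝ) ^ n) ^ 2 = 16 ^ n := by rw [← pow_mul, mul_comm, pow_mul]; norm_num
  have hsq : ((n.centralBinom : ℝ) * √n) ^ 2 ≤ (4 ^ n) ^ 2 := by
    rw [mul_pow, sq_sqrt n.cast_nonneg, h4]
    nlinarith [sq_nonneg (n.centralBinom : ℝ)]
  have hle := (pow_le_pow_iff_left₀ (by positivity) (by positivity) two_ne_zero).1 hsq
  rw [binomMass, ← two_mul, ← Nat.centralBinom_eq_two_mul_choose,
    show (2 : ℝ) ^ (2 * n) = 4 ^ n by rw [pow_mul]; norm_num, div_mul_eq_mul_div,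
    div_le_one (by positivity)]
  exact hle

lemma binomMass_mul_sqrt_le_one (n d : ℕ) : binomMass n d * √n ≤ 1 :=
  (mul_le_mul_of_nonneg_right (binomMass_le_binomMass_self n d) (sqrt_nonneg _)).trans
    (binomMass_self_mul_sqrt_le_one n)

lemma binomMass_succ_le_two_rpow_mul {d : ℕ} (hn : 2 ≤ n) (hd : n + 12 * √n ≤ d) :
    binomMass n (d + 1) ≤ 2 ^ (-(√n)⁻¹) * binomMass n d := by
  have hs : 1 ≤ √(n : ℝ) := one_le_sqrt.2 (Nat.one_le_cast.2 (by omega))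
  set s := √(n : ℝ)
  have hsn : s ^ 2 = n := sq_sqrt n.cast_nonneg
  have hn₂ : (2 : ℝ) ≤ n := mod_cast hn
  have hratio : (1 + s⁻¹) * (n + d + 1) ≤ 2 * (d + 1) := by
    rw [inv_eq_one_div, one_add_div (by positivity), div_mul_eq_mul_div, div_le_iff₀ (by positivity)]
    nlinarith [mul_nonneg (sub_nonneg.2 hd) (sub_nonneg.2 hs), sq_nonneg (s - 1)]
  have hrec := two_mul_succ_mul_binomMass_succ n d
  rw [rpow_neg zero_le_two, ← div_eq_inv_mul, le_div_iff₀' (by positivity)]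
  calc (2 : ℝ) ^ s⁻¹ * binomMass n (d + 1) ≤ (1 + s⁻¹) * binomMass n (d + 1) :=
        mul_le_mul_of_nonneg_right (two_rpow_le_one_add (by positivity) (inv_le_one_of_one_le₀ hs))
          (binomMass_pos n (d + 1)).le
    _ ≤ binomMass n d := by nlinarith [binomMass_pos n d, binomMass_pos n (d + 1)]

lemma two_rpow_mul_binomMass_le_succ {d : ℕ} (hn : 0 < n) (hd : d + 12 * √n ≤ n) :
    2 ^ (√n)⁻¹ * binomMass n d ≤ binomMass n (d + 1) := by
  have hs : 1 ≤ √(n : ℝ) := one_le_sqrt.2 (Nat.one_le_cast.2 hn)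
  set s := √(n : ℝ)
  have hsn : s ^ 2 = n := sq_sqrt n.cast_nonneg
  have hratio : (1 + s⁻¹) * (2 * (d + 1)) ≤ n + d + 1 := by
    rw [inv_eq_one_div, one_add_div (by positivity), div_mul_eq_mul_div, div_le_iff₀ (by positivity)]
    nlinarith [mul_nonneg (sub_nonneg.2 hd) (by positivity : (0 : ℝ) ≤ s + 2)]
  have hrec := two_mul_succ_mul_binomMass_succ n d
  calc (2 : ℝ) ^ s⁻¹ * binomMass n d ≤ (1 + s⁻¹) * binomMass n d :=
        mul_le_mul_of_nonneg_right (two_rpow_le_one_add (by positivity) (inv_le_one_of_one_le₀ hs))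
          (binomMass_pos n d).le
    _ ≤ binomMass n (d + 1) := by nlinarith [binomMass_pos n d, binomMass_pos n (d + 1)]

lemma binomMass_add_mul_sqrt_le_two_rpow {m : ℕ} (hn : 2 ≤ n) (hm : n + 12 * √n ≤ m) (e : ℕ) :
    binomMass n (m + e) * √n ≤ 2 ^ (-(e / √n)) := by
  have hgeom := le_geom (u := fun k ↦ binomMass n (m + k)) (c := 2 ^ (-(√n)⁻¹)) (by positivity) e
    fun k _ ↦ by
      simpa [add_assoc] using binomMass_succ_le_two_rpow_mul (d := m + k) hn (by push_cast; linarith)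
  calc binomMass n (m + e) * √n ≤ (2 ^ (-(√n)⁻¹)) ^ e * (binomMass n m * √n) := by
        rw [← mul_assoc]; exact mul_le_mul_of_nonneg_right hgeom (sqrt_nonneg _)
    _ ≤ (2 ^ (-(√n)⁻¹)) ^ e * 1 := by gcongr; exact binomMass_mul_sqrt_le_one n m
    _ = 2 ^ (-(e / √n)) := by rw [mul_one, ← inv_neg, two_rpow_inv_pow, div_neg]

lemma binomMass_mul_sqrt_le_two_rpow_of_add_le {d e : ℕ} (hn : 0 < n) (h : d + e + 12 * √n ≤ n) :
    binomMass n d * √n ≤ 2 ^ (-(e / √n)) := by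
  have hgeom := geom_le (u := fun k ↦ binomMass n (d + k)) (c := 2 ^ (√n)⁻¹) (by positivity) e
    fun k hk ↦ by
      have hk : (k : ℝ) + 1 ≤ e := mod_cast hk
      simpa [add_assoc] using two_rpow_mul_binomMass_le_succ (d := d + k) hn (by push_cast; linarith)
  have hle : 2 ^ (e / √n) * (binomMass n d * √n) ≤ 1 := by
    rw [← two_rpow_inv_pow, ← mul_assoc]
    exact (mul_le_mul_of_nonneg_right hgeom (sqrt_nonneg _)).trans
      (binomMass_mul_sqrt_le_one n (d + e))
  rwa [rpow_neg zero_le_two, ← one_div, le_div_iff₀' (by positivity)]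

lemma binomMass_mul_sqrt_le_two_rpow (hn : 2 ≤ n) (d : ℕ) :
    binomMass n d * √n ≤ 2 ^ (13 - |(d : ℝ) - n| / √n) := by
  have hs₀ : 0 < √(n : ℝ) := sqrt_pos.2 (mod_cast (by omega : 0 < n))
  suffices h : ∃ e : ℕ, |(d : ℝ) - n| - 13 * √n ≤ e ∧ binomMass n d * √n ≤ 2 ^ (-(e / √n)) by
    obtain ⟨e, he, hbound⟩ := h
    refine hbound.trans (rpow_le_rpow_of_exponent_le one_le_two ?_)
    have := div_le_div_of_nonneg_right he hs₀.le
    rw [sub_div, mul_div_cancel_right₀ _ hs₀.ne'] at this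
    linarith
  rcases le_or_gt |(d : ℝ) - n| (13 * √n) with hmid | hfar
  · exact ⟨0, by simpa using hmid, by simpa using binomMass_mul_sqrt_le_one n d⟩
  have hs : 1 ≤ √(n : ℝ) := one_le_sqrt.2 (Nat.one_le_cast.2 (by omega))
  rcases lt_abs.1 hfar with hright | hleft
  · set m := n + ⌈12 * √(n : ℝ)⌉₊
    have hceil := Nat.ceil_lt_add_one (by positivity : (0 : ℝ) ≤ 12 * √n)
    have hm : n + 12 * √n ≤ m := by push_cast [m]; linarith [Nat.le_ceil (12 * √(n : ℝ))]
    have hmd : m ≤ d := by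
      have : (m : ℝ) ≤ d := by push_cast [m]; linarith
      exact_mod_cast this
    obtain ⟨e, rfl⟩ := Nat.exists_eq_add_of_le hmd
    refine ⟨e, ?_, binomMass_add_mul_sqrt_le_two_rpow hn hm e⟩
    rw [abs_of_pos (by linarith)]
    push_cast [m] at hceil ⊢
    linarith
  · set e := ⌊(n : ℝ) - d - 12 * √n⌋₊
    have hfloor := Nat.floor_le (by linarith : (0 : ℝ) ≤ n - d - 12 * √n)
    refine ⟨e, ?_, binomMass_mul_sqrt_le_two_rpow_of_add_le (by omega) (by linarith)⟩
    rw [abs_of_neg (by linarith)]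
    linarith [Nat.lt_floor_add_one ((n : ℝ) - d - 12 * √n)]

end binomMass

lemma Fbin_eq_binomMass_mul_sqrt {n : ℕ} {u : ℝ} (hk : -(n : ℤ) ≤ ⌊u * √n⌋) :
    Fbin n u = binomMass n (n + ⌊u * √n⌋).toNat * √n := by
  rw [Fbin, binomMass, show (2 * (n : ℤ) + ⌊u * √n⌋).toNat = n + (n + ⌊u * √n⌋).toNat by omega]
  ring

/-- There is a constant `C > 0` such that `F_n(u) ≤ C · 2^{-|u|}` for every `n ≥ 2`
and every `u ≥ -√n`. -/
theorem Fbin_uniform_bound :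
    ∃ C > (0 : ℝ), ∀ n : ℕ, 2 ≤ n → ∀ u : ℝ, -Real.sqrt n ≤ u →
      Fbin n u ≤ C * (2 : ℝ) ^ (-|u|) := by
  refine ⟨2 ^ (14 : ℝ), by positivity, fun n hn u hu ↦ ?_⟩
  have hs : 1 ≤ √(n : ℝ) := one_le_sqrt.2 (Nat.one_le_cast.2 (by omega))
  have hk : -(n : ℤ) ≤ ⌊u * √n⌋ := by
    rw [Int.le_floor]
    push_cast
    nlinarith [mul_self_sqrt n.cast_nonneg]
  have hd : ((n + ⌊u * √n⌋).toNat : ℝ) - n = ⌊u * √n⌋ := by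
    rw [sub_eq_iff_eq_add', ← Int.cast_natCast, Int.toNat_of_nonneg (by omega)]
    push_cast
    ring
  have hexp := abs_sub_one_le_abs_floor_mul_div u hs
  rw [Fbin_eq_binomMass_mul_sqrt hk, ← rpow_add two_pos]
  refine (binomMass_mul_sqrt_le_two_rpow hn _).trans (rpow_le_rpow_of_exponent_le one_le_two ?_)
  rw [hd]
  linarith
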